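/- The map τ ↦ τ⁻¹ (inverse permutation) gives a Hopf algebra isomorphism from (MPR, m, μ) to (MPR, m', μ'), induced from the top-bottom swap (ρ,σ) ↦ (σ,ρ) of dWHA under the embedding of permutations as substitutions. -/

import Mathlib

open Finsupp TensorProduct

/-- All shuffles of two words (with multiplicity). -/
def shuffles : List ℕ → List ℕ → List (List ℕ)
  | [], t => [t]
  | s, [] => [s]
  | a :: s, b :: t =>
      ((shuffles s (b :: t)).map (a :: ·)) ++ ((shuffles (a :: s) t).map (b :: ·))

/-- Standardization of an injective word: each letter is replaced by its rank. -/
def stdz (w : List ℕ) : List ℕ := w.map (fun a => w.countP (fun b => b ≤ a))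

/-- `w` is a permutation word: a rearrangement of `[1,…,n]` where `n` is its length. -/
def IsPermWord (w : List ℕ) : Prop := w.Perm (List.range' 1 w.length)

/-- The underlying free abelian group of `MPR` (and of related word Hopf algebras). -/
abbrev MPR : Type := List ℕ →₀ ℤ

/-- First multiplication of `MPR`: shifted shuffle. -/
noncomputable def mulMPR (σ τ : List ℕ) : MPR :=
  ((shuffles σ (τ.map (· + σ.length))).map (fun γ => Finsupp.single γ (1 : ℤ))).sum

/-- First comultiplication of `MPR`: standardized cuts. -/
noncomputable def comulMPR (σ : List ℕ) : MPR ⊗[ℤ] MPR :=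
  ((List.range (σ.length + 1)).map (fun i =>
    Finsupp.single (stdz (σ.take i)) (1 : ℤ) ⊗ₜ[ℤ]
      Finsupp.single (stdz (σ.drop i)) (1 : ℤ))).sum

/-- Second multiplication of `MPR`: `m'(σ⊗τ) = Σ u*v` over all pairs `(u,v)` with
`st(u) = σ`, `st(v) = τ` and `supp(u) ∪ supp(v) = {1,…,m+n}`. -/
noncomputable def mulMPR' (σ τ : List ℕ) : MPR :=
  (((List.range' 1 (σ.length + τ.length)).permutations.filter
      (fun w => stdz (w.take σ.length) = σ ∧ stdz (w.drop σ.length) = τ)).map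
    (fun w => Finsupp.single w (1 : ℤ))).sum

/-- Second comultiplication of `MPR`: `μ'(τ) = Σᵢ τ_{{1..i}} ⊗ st(τ_{{i+1..n}})`. -/
noncomputable def comulMPR' (τ : List ℕ) : MPR ⊗[ℤ] MPR :=
  ((List.range (τ.length + 1)).map (fun i =>
    Finsupp.single (τ.filter (fun a => a ≤ i)) (1 : ℤ) ⊗ₜ[ℤ]
      Finsupp.single (stdz (τ.filter (fun a => i < a))) (1 : ℤ))).sum

/-- The inverse of a permutation word. -/
def invWord (w : List ℕ) : List ℕ := (List.range' 1 w.length).map (fun i => w.idxOf i + 1)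

/-- The linear extension of `τ ↦ τ⁻¹` to the free abelian group `MPR`. -/
noncomputable def invL : MPR →ₗ[ℤ] MPR := Finsupp.lmapDomain ℤ ℤ invWord

/-!
For a permutation word `w` of length `N` and a cut point `m`, the positions of the values
`≤ m` in `w⁻¹` are read off from the prefix `w₁ ⋯ wₘ`: restricting `w⁻¹` to the values `≤ m`
gives `st(w₁ ⋯ wₘ)⁻¹`, and restricting it to the values `> m` gives `st(wₘ₊₁ ⋯ w_N)⁻¹` shifted
up by `m`. Applied to `w = σ` this matches the cuts of `μ(σ)` term by term with `μ'(σ⁻¹)`.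
On the product side, `γ` is a shifted shuffle of `σ` and `τ` exactly when its restrictions to
the values `≤ m` and `> m` are `σ` and the shifted `τ`; for `γ = w⁻¹` this says
`st(w₁ ⋯ wₘ) = σ⁻¹` and `st(wₘ₊₁ ⋯ w_N) = τ⁻¹`, so inversion is a bijection from the shuffles
onto the words summed in `m'(σ⁻¹ ⊗ τ⁻¹)`.
-/

open List

namespace List

variable {α : Type*}

theorem Sublist.of_cons_of_notMem {l γ : List α} {c : α} (h : l <+ c :: γ) (hc : c ∉ l) :
    l <+ γ :=
  (sublist_cons_iff.1 h).resolve_right (by rintro ⟨r, rfl, -⟩; exact hc mem_cons_self)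

theorem Sublist.eq_of_cons_of_notMem {a c : α} {s γ : List α} (h : a :: s <+ c :: γ)
    (hc : c ∉ γ) (hcs : c ∈ a :: s) : a = c ∧ s <+ γ := by
  rcases sublist_cons_iff.1 h with h | ⟨r, hr, hrγ⟩
  · exact absurd (h.subset hcs) hc
  · obtain ⟨rfl, rfl⟩ := cons.inj hr
    exact ⟨rfl, hrγ⟩

theorem cons_shuffle_cases {a b c : α} {s t γ : List α}
    (h : (a :: s ++ b :: t).Nodup) (hp : c :: γ ~ a :: s ++ b :: t) (hs : a :: s <+ c :: γ)
    (ht : b :: t <+ c :: γ) :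
    (c = a ∧ γ ~ s ++ b :: t ∧ s <+ γ ∧ b :: t <+ γ) ∨
      (c = b ∧ γ ~ a :: s ++ t ∧ a :: s <+ γ ∧ t <+ γ) := by
  have hcγ : c ∉ γ := (nodup_cons.1 (hp.nodup_iff.2 h)).1
  have hdisj := disjoint_of_nodup_append h
  rcases mem_append.1 (hp.subset mem_cons_self) with hc | hc
  · obtain ⟨rfl, hs'⟩ := hs.eq_of_cons_of_notMem hcγ hc
    exact .inl ⟨rfl, (perm_cons _).1 hp, hs', ht.of_cons_of_notMem fun h => hdisj hc h⟩
  · obtain ⟨rfl, ht'⟩ := ht.eq_of_cons_of_notMem hcγ hc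
    exact .inr ⟨rfl, (perm_cons _).1 (hp.trans perm_middle), hs.of_cons_of_notMem
      fun h => hdisj h hc, ht'⟩

theorem Nodup.sublist_iff_filter_eq {l s : List α} {p : α → Bool} (hl : l.Nodup)
    (hp : ∀ x ∈ l, x ∈ s ↔ p x) : s <+ l ↔ l.filter p = s := by
  refine ⟨fun hs => ?_, fun h => h ▸ filter_sublist⟩
  refine (hl.perm_iff_eq_of_sublist filter_sublist hs).1 ?_
  refine (perm_ext_iff_of_nodup (hl.sublist filter_sublist) (hl.sublist hs)).2 fun x => ?_
  rw [mem_filter]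
  exact ⟨fun ⟨hx, hpx⟩ => (hp x hx).2 hpx, fun hx => ⟨hs.subset hx, (hp x (hs.subset hx)).1 hx⟩⟩

theorem Nodup.mem_drop_iff_le_idxOf [BEq α] [LawfulBEq α] {l : List α} (hl : l.Nodup)
    {m : ℕ} {a : α} (ha : a ∈ l) : a ∈ l.drop m ↔ m ≤ l.idxOf a := by
  have hsplit : a ∈ l.take m ∨ a ∈ l.drop m := by rwa [← mem_append, take_append_drop]
  have hdisj := disjoint_take_drop hl (le_refl m)
  rw [← not_lt, ← mem_take_iff_idxOf_lt ha]
  exact ⟨fun hd ht => hdisj ht hd, hsplit.resolve_left⟩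

theorem Nodup.idxOf_eq_add_of_mem_drop [BEq α] [LawfulBEq α] {l : List α} (hl : l.Nodup)
    {m : ℕ} {a : α} (ha : a ∈ l.drop m) : l.idxOf a = m + (l.drop m).idxOf a := by
  have hm : m ≤ l.length := by
    by_contra! h
    simp [drop_of_length_le h.le] at ha
  have hnt : a ∉ l.take m := fun ht => disjoint_take_drop hl (le_refl m) ht ha
  conv_lhs => rw [← take_append_drop m l]
  rw [idxOf_append_of_notMem hnt, length_take, min_eq_left hm]

theorem idxOf_map_of_injOn [BEq α] [LawfulBEq α] {β : Type*} [BEq β] [LawfulBEq β]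
    {f : α → β} {l : List α} (hf : ∀ x ∈ l, ∀ y ∈ l, f x = f y → x = y) {a : α} (ha : a ∈ l) :
    (l.map f).idxOf (f a) = l.idxOf a := by
  induction l with
  | nil => simp at ha
  | cons c l ih =>
    by_cases hac : a = c
    · subst hac; simp
    · have hfac : f c ≠ f a := fun h => hac (hf a ha c mem_cons_self h.symm)
      rw [map_cons, idxOf_cons_ne _ hfac, idxOf_cons_ne _ (Ne.symm hac)]
      exact congrArg (· + 1) <| ih (fun x hx y hy => hf x (mem_cons_of_mem _ hx) y
        (mem_cons_of_mem _ hy)) ((mem_cons.1 ha).resolve_left hac)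

theorem countP_le_lt_countP_le {u : List ℕ} {a b : ℕ} (hb : b ∈ u) (hab : a < b) :
    u.countP (· ≤ a) < u.countP (· ≤ b) := by
  induction u with
  | nil => simp at hb
  | cons c u ih =>
    have hmono : u.countP (· ≤ a) ≤ u.countP (· ≤ b) :=
      countP_mono_left fun x _ hx => by simp only [decide_eq_true_eq] at hx ⊢; omega
    rcases mem_cons.1 hb with rfl | hb
    · simpa [show ¬ b ≤ a by omega] using Nat.lt_succ_of_le hmono
    · have := ih hb
      simp only [countP_cons, decide_eq_true_eq]; split_ifs <;> omega

theorem countP_le_range' {n a : ℕ} (h : a ≤ n) : (range' 1 n).countP (· ≤ a) = a := by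
  induction n with
  | zero => simp_all
  | succ n ih =>
    rw [range'_1_concat, countP_append, countP_singleton]
    simp only [decide_eq_true_eq]
    rcases h.lt_or_eq with hlt | rfl
    · rw [ih (by omega), if_neg (by omega), add_zero]
    · rw [countP_eq_length.2 fun x hx => by
        simp only [mem_range'_1, decide_eq_true_eq] at hx ⊢; omega, length_range', if_pos (by omega)]

end List

theorem IsPermWord.nodup {w : List ℕ} (h : IsPermWord w) : w.Nodup :=
  Perm.nodup_iff h |>.2 nodup_range'

theorem IsPermWord.mem_iff {w : List ℕ} (h : IsPermWord w) {k : ℕ} :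
    k ∈ w ↔ 1 ≤ k ∧ k ≤ w.length := by
  rw [Perm.mem_iff h, mem_range'_1]; omega

theorem IsPermWord.perm {w : List ℕ} (h : IsPermWord w) {n : ℕ} (hn : w.length = n) :
    w ~ range' 1 n :=
  hn ▸ h

theorem IsPermWord.of_perm {w : List ℕ} {n : ℕ} (h : w ~ range' 1 n) : IsPermWord w := by
  rwa [IsPermWord, show w.length = n by simpa using h.length_eq]

theorem isPermWord_of_nodup {w : List ℕ} (hw : w.Nodup) (hmem : ∀ k ∈ w, 1 ≤ k ∧ k ≤ w.length) :
    IsPermWord w :=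
  (hw.subperm fun k hk => mem_range'_1.2 (by have := hmem k hk; omega)).perm_of_length_le
    (by simp)

@[simp] theorem length_invWord (w : List ℕ) : (invWord w).length = w.length := by
  simp [invWord]

theorem getElem_invWord (w : List ℕ) {j : ℕ} (hj : j < (invWord w).length) :
    (invWord w)[j] = w.idxOf (j + 1) + 1 := by
  simp [invWord, add_comm]

theorem isPermWord_invWord {w : List ℕ} (h : IsPermWord w) : IsPermWord (invWord w) := by
  have hmem : ∀ k ∈ range' 1 w.length, k ∈ w := fun k hk => (Perm.mem_iff h).2 hk
  refine isPermWord_of_nodup ?_ ?_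
  · refine Nodup.map_on (fun x hx y hy hxy => ?_) nodup_range'
    exact (idxOf_inj (hmem x hx)).1 (by simpa using hxy)
  · simp only [invWord, mem_map, length_map, length_range', forall_exists_index, and_imp]
    rintro _ k hk rfl
    have := idxOf_lt_length_of_mem (hmem k hk)
    omega

theorem IsPermWord.idxOf_invWord {w : List ℕ} (h : IsPermWord w) {j : ℕ} (hj : j < w.length) :
    (invWord w).idxOf (j + 1) = w[j] - 1 := by
  have hk := h.mem_iff.1 (getElem_mem hj)
  have hk' : w[j] - 1 < (invWord w).length := by rw [length_invWord]; omega
  have : (invWord w)[w[j] - 1] = j + 1 := by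
    rw [getElem_invWord, Nat.sub_add_cancel hk.1, h.nodup.idxOf_getElem]
  rw [← this, (isPermWord_invWord h).nodup.idxOf_getElem]

theorem IsPermWord.invWord_invWord {w : List ℕ} (h : IsPermWord w) : invWord (invWord w) = w := by
  refine ext_getElem (by simp) fun j hj hj' => ?_
  rw [getElem_invWord, h.idxOf_invWord hj']
  have := h.mem_iff.1 (getElem_mem hj')
  omega

theorem invWord_eq_iff {x y : List ℕ} (hx : IsPermWord x) (hy : IsPermWord y) :
    invWord x = y ↔ x = invWord y := by
  constructor
  · rintro rfl; exact hx.invWord_invWord.symm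
  · rintro rfl; exact hy.invWord_invWord

theorem length_stdz (u : List ℕ) : (stdz u).length = u.length := length_map _

theorem countP_le_injOn (u : List ℕ) :
    ∀ x ∈ u, ∀ y ∈ u, u.countP (· ≤ x) = u.countP (· ≤ y) → x = y := by
  intro x hx y hy hxy
  rcases lt_trichotomy x y with h | h | h
  · exact absurd hxy (countP_le_lt_countP_le hy h).ne
  · exact h
  · exact absurd hxy (countP_le_lt_countP_le hx h).ne'

theorem isPermWord_stdz {u : List ℕ} (hu : u.Nodup) : IsPermWord (stdz u) := by
  refine isPermWord_of_nodup (hu.map_on (countP_le_injOn u)) ?_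
  simp only [stdz, mem_map, length_map, forall_exists_index, and_imp]
  rintro _ a ha rfl
  exact ⟨countP_pos_iff.2 ⟨a, ha, by simp⟩, countP_le_length⟩

theorem stdz_map_add (c : ℕ) (v : List ℕ) : stdz (v.map (· + c)) = stdz v := by
  simp [stdz, countP_map, Function.comp_def]

theorem IsPermWord.stdz_eq {w : List ℕ} (h : IsPermWord w) : stdz w = w := by
  refine (map_congr_left fun a ha => ?_).trans (map_id w)
  rw [Perm.countP_eq _ h, countP_le_range' (h.mem_iff.1 ha).2, id]

theorem map_countP_le_filter_range' {n : ℕ} {u : List ℕ} (hu : u.Nodup)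
    (hsub : ∀ x ∈ u, x ∈ range' 1 n) :
    ((range' 1 n).filter (· ∈ u)).map (fun a => u.countP (· ≤ a)) = range' 1 u.length := by
  have hperm : (range' 1 n).filter (· ∈ u) ~ u :=
    (perm_ext_iff_of_nodup (Nodup.filter _ nodup_range') hu).2 fun a => by
      simpa using fun h => hsub a h
  have hsorted := (Pairwise.sublist filter_sublist pairwise_lt_range').imp_of_mem
    fun _ hb hab => countP_le_lt_countP_le (hperm.subset hb) hab
  exact Perm.eq_of_sortedLE (pairwise_map.2 hsorted).sortedLT.sortedLE
    (Pairwise.sortedLT pairwise_lt_range').sortedLE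
    ((hperm.map _).trans ((isPermWord_stdz hu).perm (length_stdz u)))

theorem invWord_stdz {n : ℕ} {u : List ℕ} (hu : u.Nodup) (hsub : ∀ x ∈ u, x ∈ range' 1 n) :
    invWord (stdz u) = ((range' 1 n).filter (· ∈ u)).map (u.idxOf · + 1) := by
  rw [invWord, length_stdz, ← map_countP_le_filter_range' hu hsub, map_map]
  refine map_congr_left fun k hk => ?_
  have hku : k ∈ u := by simpa using (mem_filter.1 hk).2
  simp only [Function.comp_apply, stdz]
  rw [idxOf_map_of_injOn (countP_le_injOn u) hku]

theorem filter_invWord (w : List ℕ) (p : ℕ → Bool) :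
    (invWord w).filter p =
      ((range' 1 w.length).filter fun k => p (w.idxOf k + 1)).map (w.idxOf · + 1) :=
  filter_map

theorem IsPermWord.filter_le_invWord {w : List ℕ} (hw : IsPermWord w) (m : ℕ) :
    (invWord w).filter (· ≤ m) = invWord (stdz (w.take m)) := by
  rw [invWord_stdz (hw.nodup.sublist (take_sublist m w)) fun x hx => Perm.subset hw
    (take_subset m w hx), filter_invWord]
  have hpred : ∀ k ∈ range' 1 w.length, decide (w.idxOf k + 1 ≤ m) = decide (k ∈ w.take m) :=
    fun k hk => by
      rw [decide_eq_decide, mem_take_iff_idxOf_lt ((Perm.mem_iff hw).2 hk)]; omega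
  rw [filter_congr hpred]
  exact map_congr_left fun k hk => by
    rw [(take_prefix m w).idxOf_eq_of_mem (of_decide_eq_true (mem_filter.1 hk).2)]

theorem IsPermWord.filter_lt_invWord {w : List ℕ} (hw : IsPermWord w) (m : ℕ) :
    (invWord w).filter (m < ·) = (invWord (stdz (w.drop m))).map (· + m) := by
  rw [invWord_stdz (hw.nodup.sublist (drop_sublist m w)) fun x hx => Perm.subset hw
    (drop_subset m w hx), filter_invWord, map_map]
  have hpred : ∀ k ∈ range' 1 w.length, decide (m < w.idxOf k + 1) = decide (k ∈ w.drop m) :=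
    fun k hk => by
      rw [decide_eq_decide, hw.nodup.mem_drop_iff_le_idxOf ((Perm.mem_iff hw).2 hk)]; omega
  rw [filter_congr hpred]
  refine map_congr_left fun k hk => ?_
  rw [Function.comp_apply, hw.nodup.idxOf_eq_add_of_mem_drop
    (of_decide_eq_true (mem_filter.1 hk).2)]
  omega

theorem mem_shuffles {s t γ : List ℕ} (h : (s ++ t).Nodup) :
    γ ∈ shuffles s t ↔ γ ~ s ++ t ∧ s <+ γ ∧ t <+ γ := by
  fun_induction shuffles s t generalizing γ with
  | case1 t =>
    rw [mem_singleton]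
    refine ⟨by rintro rfl; simp, fun ⟨hp, _, ht⟩ => (ht.eq_of_length hp.length_eq.symm).symm⟩
  | case2 s hs =>
    obtain ⟨a, s, rfl⟩ := exists_cons_of_ne_nil hs
    rw [mem_singleton]
    refine ⟨by rintro rfl; simp, fun ⟨hp, hs, _⟩ => (hs.eq_of_length (by simpa using
      hp.length_eq.symm)).symm⟩
  | case3 a s b t ih₁ ih₂ =>
    have h₁ : (s ++ b :: t).Nodup := (nodup_cons.1 h).2
    have h₂ : (a :: s ++ t).Nodup := (nodup_cons.1 (perm_middle.nodup_iff.1 h)).2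
    rw [mem_append, mem_map, mem_map]
    constructor
    · rintro (⟨γ, hγ, rfl⟩ | ⟨γ, hγ, rfl⟩)
      · obtain ⟨hp, hs, ht⟩ := (ih₁ h₁).1 hγ
        exact ⟨hp.cons a, hs.cons_cons a, ht.cons a⟩
      · obtain ⟨hp, hs, ht⟩ := (ih₂ h₂).1 hγ
        exact ⟨(hp.cons b).trans perm_middle.symm, hs.cons b, ht.cons_cons b⟩
    · rintro ⟨hp, hs, ht⟩
      obtain ⟨c, γ, rfl⟩ := exists_cons_of_ne_nil (ne_nil_of_mem (hp.symm.subset mem_cons_self))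
      rcases cons_shuffle_cases h hp hs ht with ⟨rfl, hγ⟩ | ⟨rfl, hγ⟩
      · exact .inl ⟨γ, (ih₁ h₁).2 hγ, rfl⟩
      · exact .inr ⟨γ, (ih₂ h₂).2 hγ, rfl⟩

theorem nodup_shuffles {s t : List ℕ} (h : (s ++ t).Nodup) : (shuffles s t).Nodup := by
  fun_induction shuffles s t with
  | case1 t => simp
  | case2 s hs =>
    obtain ⟨a, s, rfl⟩ := exists_cons_of_ne_nil hs
    simp
  | case3 a s b t ih₁ ih₂ =>
    have hab : a ≠ b := fun hab => disjoint_of_nodup_append h mem_cons_self (hab ▸ mem_cons_self)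
    refine Nodup.append ((ih₁ (nodup_cons.1 h).2).map cons_injective)
      ((ih₂ (nodup_cons.1 (perm_middle.nodup_iff.1 h)).2).map cons_injective) ?_
    simp only [List.Disjoint, mem_map]
    rintro _ ⟨_, _, rfl⟩ ⟨_, _, heq⟩
    exact hab (cons.inj heq).1.symm

theorem IsPermWord.map_add_perm {τ : List ℕ} (hτ : IsPermWord τ) (c : ℕ) :
    τ.map (· + c) ~ range' (1 + c) τ.length := by
  simpa [← map_add_range', add_comm] using hτ.map (· + c)

theorem IsPermWord.append_map_add_perm {σ τ : List ℕ} (hσ : IsPermWord σ) (hτ : IsPermWord τ) :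
    σ ++ τ.map (· + σ.length) ~ range' 1 (σ.length + τ.length) := by
  simpa [range'_append] using hσ.append (hτ.map_add_perm σ.length)

section HopfIsomorphism

variable {σ τ : List ℕ}

theorem mem_shuffles_map_add_iff (hσ : IsPermWord σ) (hτ : IsPermWord τ) {γ : List ℕ} :
    γ ∈ shuffles σ (τ.map (· + σ.length)) ↔ γ ~ range' 1 (σ.length + τ.length) ∧
      γ.filter (· ≤ σ.length) = σ ∧ γ.filter (σ.length < ·) = τ.map (· + σ.length) := by
  have hcat := hσ.append_map_add_perm hτ
  have key : ∀ {γ : List ℕ}, γ ~ range' 1 (σ.length + τ.length) →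
      (σ <+ γ ↔ γ.filter (· ≤ σ.length) = σ) ∧
        (τ.map (· + σ.length) <+ γ ↔ γ.filter (σ.length < ·) = τ.map (· + σ.length)) := by
    intro γ hγ
    have hnd := hγ.nodup_iff.2 nodup_range'
    have hmem : ∀ x ∈ γ, 1 ≤ x ∧ x < 1 + (σ.length + τ.length) :=
      fun x hx => mem_range'_1.1 (hγ.subset hx)
    refine ⟨hnd.sublist_iff_filter_eq fun x hx => ?_, hnd.sublist_iff_filter_eq fun x hx => ?_⟩
    · have := hmem x hx
      rw [hσ.mem_iff, decide_eq_true_iff]; omega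
    · have := hmem x hx
      rw [(hτ.map_add_perm _).mem_iff, mem_range'_1, decide_eq_true_iff]; omega
  rw [mem_shuffles (hcat.nodup_iff.2 nodup_range')]
  constructor
  · rintro ⟨hp, hs, ht⟩
    have hγ := hp.trans hcat
    exact ⟨hγ, (key hγ).1.1 hs, (key hγ).2.1 ht⟩
  · rintro ⟨hγ, hs, ht⟩
    exact ⟨hγ.trans hcat.symm, (key hγ).1.2 hs, (key hγ).2.2 ht⟩

theorem invWord_mem_shuffles_iff (hσ : IsPermWord σ) (hτ : IsPermWord τ) {w : List ℕ}
    (hw : w ~ range' 1 (σ.length + τ.length)) :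
    invWord w ∈ shuffles σ (τ.map (· + σ.length)) ↔
      stdz (w.take σ.length) = invWord σ ∧ stdz (w.drop σ.length) = invWord τ := by
  have hw' := IsPermWord.of_perm hw
  rw [mem_shuffles_map_add_iff hσ hτ, hw'.filter_le_invWord, hw'.filter_lt_invWord,
    map_inj_right fun _ _ => Nat.add_right_cancel,
    invWord_eq_iff (isPermWord_stdz (hw'.nodup.sublist (take_sublist _ _))) hσ,
    invWord_eq_iff (isPermWord_stdz (hw'.nodup.sublist (drop_sublist _ _))) hτ]
  exact and_iff_right ((isPermWord_invWord hw').perm (by simpa using hw.length_eq))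

theorem map_invWord_shuffles_perm (hσ : IsPermWord σ) (hτ : IsPermWord τ) :
    (shuffles σ (τ.map (· + σ.length))).map invWord ~
      (range' 1 (σ.length + τ.length)).permutations.filter
        (fun w => stdz (w.take σ.length) = invWord σ ∧ stdz (w.drop σ.length) = invWord τ) := by
  have hcat := hσ.append_map_add_perm hτ
  have hperm : ∀ γ ∈ shuffles σ (τ.map (· + σ.length)), γ ~ range' 1 (σ.length + τ.length) :=
    fun γ hγ => ((mem_shuffles_map_add_iff hσ hτ).1 hγ).1
  have hinj : ∀ γ ∈ shuffles σ (τ.map (· + σ.length)), ∀ γ' ∈ shuffles σ (τ.map (· + σ.length)),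
      invWord γ = invWord γ' → γ = γ' := fun γ hγ γ' hγ' h => by
    rw [← (IsPermWord.of_perm (hperm γ hγ)).invWord_invWord, h,
      (IsPermWord.of_perm (hperm γ' hγ')).invWord_invWord]
  refine (perm_ext_iff_of_nodup ((nodup_shuffles (hcat.nodup_iff.2 nodup_range')).map_on hinj)
    (Nodup.filter _ (nodup_permutations _ nodup_range'))).2 fun w => ?_
  simp only [mem_map, mem_filter, mem_permutations, decide_eq_true_eq]
  constructor
  · rintro ⟨γ, hγ, rfl⟩
    have hγ' := IsPermWord.of_perm (hperm γ hγ)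
    have hw : invWord γ ~ range' 1 (σ.length + τ.length) :=
      (isPermWord_invWord hγ').perm (by simpa using (hperm γ hγ).length_eq)
    exact ⟨hw, (invWord_mem_shuffles_iff hσ hτ hw).1 (by rwa [hγ'.invWord_invWord])⟩
  · rintro ⟨hw, hconds⟩
    exact ⟨invWord w, (invWord_mem_shuffles_iff hσ hτ hw).2 hconds,
      (IsPermWord.of_perm hw).invWord_invWord⟩

theorem invL_single (w : List ℕ) : invL (single w 1) = single (invWord w) 1 := by
  simp [invL]

theorem invL_mulMPR (hσ : IsPermWord σ) (hτ : IsPermWord τ) :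
    invL (mulMPR σ τ) = mulMPR' (invWord σ) (invWord τ) := by
  rw [mulMPR, mulMPR', map_list_sum, map_map, length_invWord, length_invWord]
  simpa only [map_map, Function.comp_def, invL_single] using
    ((map_invWord_shuffles_perm hσ hτ).map (single · (1 : ℤ))).sum_eq

theorem map_invL_comulMPR (hσ : IsPermWord σ) :
    TensorProduct.map invL invL (comulMPR σ) = comulMPR' (invWord σ) := by
  rw [comulMPR, comulMPR', map_list_sum, map_map, length_invWord]
  refine congrArg List.sum (map_congr_left fun i _ => ?_)
  rw [Function.comp_apply, map_tmul, invL_single, invL_single, hσ.filter_le_invWord,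
    hσ.filter_lt_invWord, stdz_map_add, (isPermWord_invWord (isPermWord_stdz
      (hσ.nodup.sublist (drop_sublist i σ)))).stdz_eq]

end HopfIsomorphism

/-- The map `τ ↦ τ⁻¹` is a Hopf algebra isomorphism `(MPR, m, μ) → (MPR, m', μ')`:
it is an involution on permutation words, intertwines the shifted-shuffle
multiplication with `m'`, and the standardized-cut comultiplication with `μ'`. -/
theorem stmt9 :
    (∀ σ : List ℕ, IsPermWord σ → invWord (invWord σ) = σ) ∧
    (∀ σ τ : List ℕ, IsPermWord σ → IsPermWord τ →
      invL (mulMPR σ τ) = mulMPR' (invWord σ) (invWord τ)) ∧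
    (∀ σ : List ℕ, IsPermWord σ →
      TensorProduct.map invL invL (comulMPR σ) = comulMPR' (invWord σ)) :=
  ⟨fun _ hσ => hσ.invWord_invWord, fun _ _ hσ hτ => invL_mulMPR hσ hτ,
    fun _ hσ => map_invL_comulMPR hσ⟩
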